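/- Let Ω ⊂ ℝ² be a bounded Lipschitz domain, μ, λ > 0, and let a(u,v) = ∫_Ω (μ ∇u:∇v + (μ+λ)(div u)(div v)) dx on H¹₀(Ω;ℝ²). Suppose w ∈ H¹₀(Ω;ℝ²) solves a(w,v) = ∫_Ω f·v dx for all v ∈ H¹₀(Ω;ℝ²) with f ∈ L²(Ω;ℝ²), and suppose there exists w* ∈ H¹₀(Ω;ℝ²) with div w* = div w and ‖w*‖_{H¹} ≤ C₀‖div w‖_{L²}. If additionally ‖w‖_{H¹} ≤ C₁‖f‖_{L²}, then λ‖div w‖_{L²} ≤ C‖f‖_{L²} with C depending only on C₀, C₁, μ, and the Poincaré constant of Ω (but not on λ). -/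

import Mathlib

open MeasureTheory

noncomputable def pderiv2 (j : Fin 2) (f : (Fin 2 → ℝ) → ℝ) (x : Fin 2 → ℝ) : ℝ :=
  fderiv ℝ f x (Pi.single j 1)

/-- Entry `(i,j)` of the displacement gradient tensor `∇v`. -/
noncomputable def gradT (v : (Fin 2 → ℝ) → Fin 2 → ℝ) (x : Fin 2 → ℝ) (i j : Fin 2) : ℝ :=
  pderiv2 j (fun y => v y i) x

/-- `div v = tr (∇v)`. -/
noncomputable def div2 (v : (Fin 2 → ℝ) → Fin 2 → ℝ) (x : Fin 2 → ℝ) : ℝ :=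
  ∑ i : Fin 2, gradT v x i i

/-- The elasticity bilinear form `a(u,v) = ∫_Ω (μ ∇u:∇v + (μ+λ)(div u)(div v)) dx`. -/
noncomputable def elastForm (Ω : Set (Fin 2 → ℝ)) (μ lam : ℝ)
    (u v : (Fin 2 → ℝ) → Fin 2 → ℝ) : ℝ :=
  ∫ x in Ω, (μ * ∑ i : Fin 2, ∑ j : Fin 2, gradT u x i j * gradT v x i j
      + (μ + lam) * (div2 u x) * (div2 v x))

/-- `L²(Ω)` norm of a scalar function. -/
noncomputable def L2s (Ω : Set (Fin 2 → ℝ)) (g : (Fin 2 → ℝ) → ℝ) : ℝ :=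
  Real.sqrt (∫ x in Ω, (g x) ^ 2)

/-- `L²(Ω)` norm of a vector field. -/
noncomputable def L2v (Ω : Set (Fin 2 → ℝ)) (g : (Fin 2 → ℝ) → Fin 2 → ℝ) : ℝ :=
  Real.sqrt (∫ x in Ω, ∑ i : Fin 2, (g x i) ^ 2)

/-- Full `H¹(Ω)` norm of a vector field. -/
noncomputable def H1n (Ω : Set (Fin 2 → ℝ)) (g : (Fin 2 → ℝ) → Fin 2 → ℝ) : ℝ :=
  Real.sqrt ((∫ x in Ω, ∑ i : Fin 2, (g x i) ^ 2)
    + ∫ x in Ω, ∑ i : Fin 2, ∑ j : Fin 2, (gradT g x i j) ^ 2)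

/-- On the restriction to `s`, a.e.-strongly-measurable functions that agree on `s`
agree almost everywhere. -/
lemma aeeq_restrict_of_eqOn {α : Type*} [MeasurableSpace α] {μ : Measure α} {s : Set α}
    {f g : α → ℝ} (hf : AEStronglyMeasurable f (μ.restrict s))
    (hg : AEStronglyMeasurable g (μ.restrict s)) (h : ∀ x ∈ s, f x = g x) :
    f =ᵐ[μ.restrict s] g := by
  set ν := μ.restrict s
  have h1 : f =ᵐ[ν] hf.mk f := hf.ae_eq_mk
  have h2 : g =ᵐ[ν] hg.mk g := hg.ae_eq_mk
  refine h1.trans (Filter.EventuallyEq.trans ?_ h2.symm)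
  have hD : MeasurableSet {x | hf.mk f x = hg.mk g x} :=
    measurableSet_eq_fun hf.stronglyMeasurable_mk.measurable hg.stronglyMeasurable_mk.measurable
  have hN1 : ν {x | ¬ f x = hf.mk f x} = 0 := by
    exact ae_iff.mp h1
  have hN2 : ν {x | ¬ g x = hg.mk g x} = 0 := by
    exact ae_iff.mp h2
  have key : ν {x | ¬ hf.mk f x = hg.mk g x} = 0 := by
    have hrw : ν {x | ¬ hf.mk f x = hg.mk g x} = μ ({x | ¬ hf.mk f x = hg.mk g x} ∩ s) :=
      Measure.restrict_apply hD.compl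
    rw [hrw]
    refine le_antisymm ?_ zero_le
    have hsub : {x | ¬ hf.mk f x = hg.mk g x} ∩ s ⊆
        ({x | ¬ f x = hf.mk f x} ∪ {x | ¬ g x = hg.mk g x}) ∩ s := by
      rintro x ⟨hx, hxs⟩
      refine ⟨?_, hxs⟩
      by_contra hcon
      push_neg at hcon
      simp only [Set.mem_union, Set.mem_setOf_eq, not_or, not_not] at hcon
      exact hx (hcon.1 ▸ hcon.2 ▸ (h x hxs) ▸ rfl)
    calc μ ({x | ¬ hf.mk f x = hg.mk g x} ∩ s)
        ≤ μ (({x | ¬ f x = hf.mk f x} ∪ {x | ¬ g x = hg.mk g x}) ∩ s) := measure_mono hsub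
      _ ≤ ν ({x | ¬ f x = hf.mk f x} ∪ {x | ¬ g x = hg.mk g x}) := Measure.le_restrict_apply _ _
      _ = 0 := measure_union_null hN1 hN2
  exact (ae_iff).mpr key

/-- Cauchy–Schwarz for nonnegative scalar functions. -/
lemma integral_CS {α : Type*} [MeasurableSpace α] {ν : Measure α} {A B : α → ℝ}
    (hA : AEStronglyMeasurable A ν) (hB : AEStronglyMeasurable B ν)
    (hA0 : ∀ x, 0 ≤ A x) (hB0 : ∀ x, 0 ≤ B x)
    (hA2 : Integrable (fun x => A x ^ 2) ν) (hB2 : Integrable (fun x => B x ^ 2) ν) :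
    ∫ x, A x * B x ∂ν ≤ Real.sqrt (∫ x, A x ^ 2 ∂ν) * Real.sqrt (∫ x, B x ^ 2 ∂ν) := by
  have hpq : (2 : ℝ).HolderConjugate 2 := Real.HolderConjugate.two_two
  have hAm : MemLp A 2 ν := (memLp_two_iff_integrable_sq hA).mpr hA2
  have hBm : MemLp B 2 ν := (memLp_two_iff_integrable_sq hB).mpr hB2
  have h2 : ENNReal.ofReal (2:ℝ) = 2 := by norm_num
  have hmain := integral_mul_le_Lp_mul_Lq_of_nonneg hpq
    (Filter.Eventually.of_forall hA0) (Filter.Eventually.of_forall hB0)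
    (h2 ▸ hAm) (h2 ▸ hBm)
  have hp2 : ∀ (C : α → ℝ), (∫ x, C x ^ (2:ℝ) ∂ν) = ∫ x, C x ^ 2 ∂ν := by
    intro C
    refine integral_congr_ae (Filter.Eventually.of_forall fun x => ?_)
    show C x ^ (2:ℝ) = C x ^ (2:ℕ)
    rw [show ((2:ℝ) = ((2:ℕ) : ℝ)) by norm_num, Real.rpow_natCast]
  rw [hp2 A, hp2 B] at hmain
  calc ∫ x, A x * B x ∂ν
      ≤ (∫ x, A x ^ 2 ∂ν) ^ (1/(2:ℝ)) * (∫ x, B x ^ 2 ∂ν) ^ (1/(2:ℝ)) := hmain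
    _ = _ := by rw [← Real.sqrt_eq_rpow, ← Real.sqrt_eq_rpow]

/-- Cauchy–Schwarz for integrals of finite-dimensional vector fields. -/
lemma integral_vec_CS {α ι : Type*} [MeasurableSpace α] [Fintype ι] {ν : Measure α}
    {F G : α → ι → ℝ}
    (hF : ∀ i, AEStronglyMeasurable (fun x => F x i) ν)
    (hG : ∀ i, AEStronglyMeasurable (fun x => G x i) ν)
    (hF2 : Integrable (fun x => ∑ i, F x i ^ 2) ν)
    (hG2 : Integrable (fun x => ∑ i, G x i ^ 2) ν)
    (hFG : Integrable (fun x => ∑ i, F x i * G x i) ν) :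
    |∫ x, ∑ i, F x i * G x i ∂ν| ≤
      Real.sqrt (∫ x, ∑ i, F x i ^ 2 ∂ν) * Real.sqrt (∫ x, ∑ i, G x i ^ 2 ∂ν) := by
  set A : α → ℝ := fun x => Real.sqrt (∑ i, F x i ^ 2) with hAdef
  set B : α → ℝ := fun x => Real.sqrt (∑ i, G x i ^ 2) with hBdef
  have hFs : AEStronglyMeasurable (fun x => ∑ i, F x i ^ 2) ν :=
    Finset.aestronglyMeasurable_fun_sum _ fun i _ => by
      simpa [pow_two] using (hF i).fun_mul (hF i)
  have hGs : AEStronglyMeasurable (fun x => ∑ i, G x i ^ 2) ν :=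
    Finset.aestronglyMeasurable_fun_sum _ fun i _ => by
      simpa [pow_two] using (hG i).fun_mul (hG i)
  have hA : AEStronglyMeasurable A ν := Real.continuous_sqrt.comp_aestronglyMeasurable hFs
  have hB : AEStronglyMeasurable B ν := Real.continuous_sqrt.comp_aestronglyMeasurable hGs
  have hA0 : ∀ x, 0 ≤ A x := fun x => Real.sqrt_nonneg _
  have hB0 : ∀ x, 0 ≤ B x := fun x => Real.sqrt_nonneg _
  have hAsq : ∀ x, A x ^ 2 = ∑ i, F x i ^ 2 := fun x =>
    Real.sq_sqrt (Finset.sum_nonneg fun i _ => sq_nonneg _)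
  have hBsq : ∀ x, B x ^ 2 = ∑ i, G x i ^ 2 := fun x =>
    Real.sq_sqrt (Finset.sum_nonneg fun i _ => sq_nonneg _)
  have hA2 : Integrable (fun x => A x ^ 2) ν :=
    hF2.congr (Filter.Eventually.of_forall fun x => (hAsq x).symm)
  have hB2 : Integrable (fun x => B x ^ 2) ν :=
    hG2.congr (Filter.Eventually.of_forall fun x => (hBsq x).symm)
  have hpt : ∀ x, |∑ i, F x i * G x i| ≤ A x * B x := by
    intro x
    have h1 : (∑ i, F x i * G x i) ^ 2 ≤ (∑ i, F x i ^ 2) * ∑ i, G x i ^ 2 :=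
      Finset.sum_mul_sq_le_sq_mul_sq _ _ _
    have h2 := Real.sqrt_le_sqrt h1
    rwa [Real.sqrt_sq_eq_abs,
      Real.sqrt_mul (Finset.sum_nonneg fun i _ => sq_nonneg _)] at h2
  have hABint : Integrable (fun x => A x * B x) ν := by
    refine Integrable.mono' (hF2.add hG2) (hA.mul hB)
      (Filter.Eventually.of_forall fun x => ?_)
    have hab : 0 ≤ A x * B x := mul_nonneg (hA0 x) (hB0 x)
    have h2 : 2 * A x * B x ≤ A x ^ 2 + B x ^ 2 := two_mul_le_add_sq _ _
    have : A x * B x ≤ A x ^ 2 + B x ^ 2 := by nlinarith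
    rw [Real.norm_of_nonneg hab]
    calc A x * B x ≤ A x ^ 2 + B x ^ 2 := this
      _ = (∑ i, F x i ^ 2) + ∑ i, G x i ^ 2 := by rw [hAsq, hBsq]
  calc |∫ x, ∑ i, F x i * G x i ∂ν|
      ≤ ∫ x, |∑ i, F x i * G x i| ∂ν := by
        simpa [Real.norm_eq_abs] using
          norm_integral_le_integral_norm (μ := ν) (fun x => ∑ i, F x i * G x i)
    _ ≤ ∫ x, A x * B x ∂ν := integral_mono hFG.abs hABint hpt
    _ ≤ Real.sqrt (∫ x, A x ^ 2 ∂ν) * Real.sqrt (∫ x, B x ^ 2 ∂ν) :=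
        integral_CS hA hB hA0 hB0 hA2 hB2
    _ = _ := by
        rw [integral_congr_ae (Filter.Eventually.of_forall hAsq),
          integral_congr_ae (Filter.Eventually.of_forall hBsq)]

/-- The λ-independent divergence estimate (2.14): if `w` solves the weak elastic
source problem `a(w,v) = ∫_Ω f·v` on the space `V` (representing `H¹₀(Ω;ℝ²)`),
and `w* ∈ V` is a divergence-preserving lifting with `‖w*‖_{H¹} ≤ C₀‖div w‖_{L²}`,
and `‖w‖_{H¹} ≤ C₁‖f‖_{L²}`, then `λ‖div w‖_{L²} ≤ C‖f‖_{L²}` with `C`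
depending only on `C₀, C₁, μ` and the Poincaré constant, but not on `λ`. -/
theorem lambda_independent_divergence_estimate
    (C0 C1 μ Cp : ℝ) (hC0 : 0 < C0) (hC1 : 0 < C1) (hμ : 0 < μ) (hCp : 0 < Cp) :
    ∃ C : ℝ, 0 < C ∧
      ∀ (lam : ℝ), 0 < lam →
      ∀ (Ω : Set (Fin 2 → ℝ)) (V : Set ((Fin 2 → ℝ) → Fin 2 → ℝ))
        (w wstar f : (Fin 2 → ℝ) → Fin 2 → ℝ),
        w ∈ V → wstar ∈ V →
        IntegrableOn (fun x => ∑ i : Fin 2, (f x i) ^ 2) Ω →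
        IntegrableOn (fun x => ∑ i : Fin 2, (wstar x i) ^ 2) Ω →
        IntegrableOn (fun x => ∑ i : Fin 2, ∑ j : Fin 2, (gradT w x i j) ^ 2) Ω →
        IntegrableOn (fun x => ∑ i : Fin 2, ∑ j : Fin 2, (gradT wstar x i j) ^ 2) Ω →
        IntegrableOn (fun x => (div2 w x) ^ 2) Ω →
        IntegrableOn (fun x => ∑ i : Fin 2, f x i * wstar x i) Ω →
        IntegrableOn (fun x => ∑ i : Fin 2, ∑ j : Fin 2,
          gradT w x i j * gradT wstar x i j) Ω →
        IntegrableOn (fun x => div2 w x * div2 wstar x) Ω →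
        (∀ i : Fin 2, AEStronglyMeasurable (fun x => f x i) (volume.restrict Ω)) →
        (∀ i : Fin 2, AEStronglyMeasurable (fun x => wstar x i) (volume.restrict Ω)) →
        (∀ i j : Fin 2, AEStronglyMeasurable (fun x => gradT w x i j) (volume.restrict Ω)) →
        (∀ i j : Fin 2, AEStronglyMeasurable (fun x => gradT wstar x i j) (volume.restrict Ω)) →
        (∀ v ∈ V, elastForm Ω μ lam w v = ∫ x in Ω, ∑ i : Fin 2, f x i * v x i) →
        (∀ x ∈ Ω, div2 wstar x = div2 w x) →
        H1n Ω wstar ≤ C0 * L2s Ω (div2 w) →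
        H1n Ω w ≤ C1 * L2v Ω f →
        lam * L2s Ω (div2 w) ≤ C * L2v Ω f := by
  refine ⟨C0 * (1 + μ * C1), by positivity, ?_⟩
  intro lam hlam Ω V w wstar f hwV hwsV hf2 hws2 hGw hGs hD2 hfws hQint hEint
    hfm hwsm hgwm hgsm hsolve hdiv hlift hstab
  set ν := volume.restrict Ω with hν
  -- a.e.-measurability of the divergences
  have hdw : AEStronglyMeasurable (div2 w) ν := by
    show AEStronglyMeasurable (fun x => ∑ i : Fin 2, gradT w x i i) ν
    exact Finset.aestronglyMeasurable_fun_sum _ fun i _ => hgwm i i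
  have hdws : AEStronglyMeasurable (div2 wstar) ν := by
    show AEStronglyMeasurable (fun x => ∑ i : Fin 2, gradT wstar x i i) ν
    exact Finset.aestronglyMeasurable_fun_sum _ fun i _ => hgsm i i
  -- `div wstar = div w` almost everywhere w.r.t. the restricted measure
  have haediv : div2 wstar =ᵐ[ν] div2 w := aeeq_restrict_of_eqOn hdws hdw hdiv
  -- abbreviations for the relevant integrals
  set F2 : ℝ := ∫ x, ∑ i : Fin 2, (f x i) ^ 2 ∂ν with hF2def
  set W2 : ℝ := ∫ x, ∑ i : Fin 2, (wstar x i) ^ 2 ∂ν with hW2def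
  set Gw2 : ℝ := ∫ x, ∑ i : Fin 2, ∑ j : Fin 2, (gradT w x i j) ^ 2 ∂ν with hGw2def
  set Gs2 : ℝ := ∫ x, ∑ i : Fin 2, ∑ j : Fin 2, (gradT wstar x i j) ^ 2 ∂ν with hGs2def
  set D : ℝ := ∫ x, (div2 w x) ^ 2 ∂ν with hDdef
  set Q : ℝ := ∫ x, ∑ i : Fin 2, ∑ j : Fin 2, gradT w x i j * gradT wstar x i j ∂ν with hQdef
  set I1 : ℝ := ∫ x, ∑ i : Fin 2, f x i * wstar x i ∂ν with hI1def
  have hF20 : 0 ≤ F2 := integral_nonneg fun x => Finset.sum_nonneg fun i _ => sq_nonneg _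
  have hW20 : 0 ≤ W2 := integral_nonneg fun x => Finset.sum_nonneg fun i _ => sq_nonneg _
  have hGw20 : 0 ≤ Gw2 := integral_nonneg fun x =>
    Finset.sum_nonneg fun i _ => Finset.sum_nonneg fun j _ => sq_nonneg _
  have hGs20 : 0 ≤ Gs2 := integral_nonneg fun x =>
    Finset.sum_nonneg fun i _ => Finset.sum_nonneg fun j _ => sq_nonneg _
  have hD0 : 0 ≤ D := integral_nonneg fun x => sq_nonneg _
  -- the variational identity tested with `wstar`
  have hE : (∫ x, div2 w x * div2 wstar x ∂ν) = D := by
    refine integral_congr_ae ?_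
    filter_upwards [haediv] with x hx
    rw [hx, pow_two]
  have hform : μ * Q + (μ + lam) * D = I1 := by
    have h0 := hsolve wstar hwsV
    have hsplit : elastForm Ω μ lam w wstar = μ * Q + (μ + lam) * D := by
      show (∫ x, (μ * ∑ i : Fin 2, ∑ j : Fin 2, gradT w x i j * gradT wstar x i j
          + (μ + lam) * (div2 w x) * (div2 wstar x)) ∂ν) = μ * Q + (μ + lam) * D
      have hint2 : Integrable (fun x => (μ + lam) * (div2 w x * div2 wstar x)) ν :=
        hEint.const_mul _
      rw [show (fun x => (μ * ∑ i : Fin 2, ∑ j : Fin 2, gradT w x i j * gradT wstar x i j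
          + (μ + lam) * (div2 w x) * (div2 wstar x)))
          = (fun x => μ * (∑ i : Fin 2, ∑ j : Fin 2, gradT w x i j * gradT wstar x i j)
          + (μ + lam) * (div2 w x * div2 wstar x)) from funext fun x => by ring]
      rw [integral_add (hQint.const_mul μ) hint2, integral_const_mul, integral_const_mul, hE]
    rw [hsplit] at h0
    rw [hI1def, hν]
    exact h0
  -- Cauchy–Schwarz bounds
  have hI1b : |I1| ≤ Real.sqrt F2 * Real.sqrt W2 :=
    integral_vec_CS hfm hwsm hf2 hws2 hfws
  have hQb : |Q| ≤ Real.sqrt Gw2 * Real.sqrt Gs2 := by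
    have e1 : (fun x => ∑ p : Fin 2 × Fin 2, gradT w x p.1 p.2 * gradT wstar x p.1 p.2)
        = (fun x => ∑ i : Fin 2, ∑ j : Fin 2, gradT w x i j * gradT wstar x i j) :=
      funext fun x => Fintype.sum_prod_type _
    have e2 : (fun x => ∑ p : Fin 2 × Fin 2, gradT w x p.1 p.2 ^ 2)
        = (fun x => ∑ i : Fin 2, ∑ j : Fin 2, gradT w x i j ^ 2) :=
      funext fun x => Fintype.sum_prod_type _
    have e3 : (fun x => ∑ p : Fin 2 × Fin 2, gradT wstar x p.1 p.2 ^ 2)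
        = (fun x => ∑ i : Fin 2, ∑ j : Fin 2, gradT wstar x i j ^ 2) :=
      funext fun x => Fintype.sum_prod_type _
    have h := integral_vec_CS (ι := Fin 2 × Fin 2) (ν := ν)
      (F := fun x p => gradT w x p.1 p.2) (G := fun x p => gradT wstar x p.1 p.2)
      (fun p => hgwm p.1 p.2) (fun p => hgsm p.1 p.2)
      (by rw [show (fun x => ∑ p : Fin 2 × Fin 2, (fun x (p : Fin 2 × Fin 2) =>
            gradT w x p.1 p.2) x p ^ 2) = _ from e2]; exact hGw)
      (by rw [show (fun x => ∑ p : Fin 2 × Fin 2, (fun x (p : Fin 2 × Fin 2) =>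
            gradT wstar x p.1 p.2) x p ^ 2) = _ from e3]; exact hGs)
      (by rw [show (fun x => ∑ p : Fin 2 × Fin 2, (fun x (p : Fin 2 × Fin 2) =>
            gradT w x p.1 p.2) x p * (fun x (p : Fin 2 × Fin 2) =>
            gradT wstar x p.1 p.2) x p) = _ from e1]; exact hQint)
    have r1 : (∫ x, ∑ p : Fin 2 × Fin 2, gradT w x p.1 p.2 * gradT wstar x p.1 p.2 ∂ν) = Q :=
      integral_congr_ae (Filter.Eventually.of_forall fun x => Fintype.sum_prod_type _)
    have r2 : (∫ x, ∑ p : Fin 2 × Fin 2, gradT w x p.1 p.2 ^ 2 ∂ν) = Gw2 :=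
      integral_congr_ae (Filter.Eventually.of_forall fun x => Fintype.sum_prod_type _)
    have r3 : (∫ x, ∑ p : Fin 2 × Fin 2, gradT wstar x p.1 p.2 ^ 2 ∂ν) = Gs2 :=
      integral_congr_ae (Filter.Eventually.of_forall fun x => Fintype.sum_prod_type _)
    rw [r1, r2, r3] at h
    exact h
  -- norm comparisons
  have hns : H1n Ω wstar = Real.sqrt (W2 + Gs2) := by
    simp only [H1n]
    rfl
  have hnw : H1n Ω w = Real.sqrt ((∫ x, ∑ i : Fin 2, (w x i) ^ 2 ∂ν) + Gw2) := by
    simp only [H1n]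
    rfl
  have hL2s : L2s Ω (div2 w) = Real.sqrt D := by
    simp only [L2s]
    rfl
  have hL2v : L2v Ω f = Real.sqrt F2 := by
    simp only [L2v]
    rfl
  rw [hns, hL2s] at hlift
  rw [hnw, hL2v] at hstab
  have hsW2 : Real.sqrt W2 ≤ C0 * Real.sqrt D :=
    le_trans (Real.sqrt_le_sqrt (le_add_of_nonneg_right hGs20)) hlift
  have hsGs : Real.sqrt Gs2 ≤ C0 * Real.sqrt D :=
    le_trans (Real.sqrt_le_sqrt (le_add_of_nonneg_left hW20)) hlift
  have hw20 : 0 ≤ ∫ x, ∑ i : Fin 2, (w x i) ^ 2 ∂ν :=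
    integral_nonneg fun x => Finset.sum_nonneg fun i _ => sq_nonneg _
  have hsGw : Real.sqrt Gw2 ≤ C1 * Real.sqrt F2 :=
    le_trans (Real.sqrt_le_sqrt (le_add_of_nonneg_left hw20)) hstab
  clear_value F2 W2 Gw2 Gs2 D Q I1
  -- key inequality: lam * D ≤ C * (√F2 * √D)
  have hsF0 : 0 ≤ Real.sqrt F2 := Real.sqrt_nonneg _
  have hsD0 : 0 ≤ Real.sqrt D := Real.sqrt_nonneg _
  have hkey : lam * D ≤ C0 * (1 + μ * C1) * (Real.sqrt F2 * Real.sqrt D) := by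
    have h1 : lam * D ≤ |I1| + μ * |Q| := by
      have heq : lam * D = I1 - μ * Q - μ * D := by linarith [hform]
      have hmD : 0 ≤ μ * D := mul_nonneg hμ.le hD0
      have habs1 : I1 ≤ |I1| := le_abs_self _
      have habs2 : -(μ * |Q|) ≤ μ * Q := by
        simpa [mul_neg] using mul_le_mul_of_nonneg_left (neg_abs_le Q) hμ.le
      linarith
    have h2 : |I1| ≤ Real.sqrt F2 * (C0 * Real.sqrt D) :=
      hI1b.trans (mul_le_mul_of_nonneg_left hsW2 hsF0)
    have h3 : μ * |Q| ≤ μ * ((C1 * Real.sqrt F2) * (C0 * Real.sqrt D)) := by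
      refine mul_le_mul_of_nonneg_left ?_ hμ.le
      exact hQb.trans (mul_le_mul hsGw hsGs (Real.sqrt_nonneg _)
        (by positivity))
    have hring : Real.sqrt F2 * (C0 * Real.sqrt D)
        + μ * ((C1 * Real.sqrt F2) * (C0 * Real.sqrt D))
        = C0 * (1 + μ * C1) * (Real.sqrt F2 * Real.sqrt D) := by ring
    linarith
  -- conclude
  rw [hL2s, hL2v]
  rcases eq_or_lt_of_le hsD0 with hz | hpos
  · rw [← hz, mul_zero]
    positivity
  · have hDD : Real.sqrt D * Real.sqrt D = D := Real.mul_self_sqrt hD0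
    have : lam * Real.sqrt D * Real.sqrt D ≤
        (C0 * (1 + μ * C1) * Real.sqrt F2) * Real.sqrt D := by
      have e1 : lam * Real.sqrt D * Real.sqrt D = lam * D := by
        rw [mul_assoc, hDD]
      have e2 : (C0 * (1 + μ * C1) * Real.sqrt F2) * Real.sqrt D
          = C0 * (1 + μ * C1) * (Real.sqrt F2 * Real.sqrt D) := by ring
      linarith
    exact le_of_mul_le_mul_right this hpos
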